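/- Let k ≥ 3 be an integer, let F be a (3, 2k)-conditionally intersecting family of k-element subsets of [n], let A, B ∈ F be disjoint, and set U = [n] − (A ∪ B). Let i be an integer with 2 ≤ i and 2i ≤ k+1. Then |F_i| ≤ w_i + k_i·b_i − n_i, where F_i = {F ∈ F : |F ∩ (A ∪ B)| = i}, w_i = binomial(k−1, i−1)·binomial(n−2k, k−i), k_i = binomial(2k, i) − binomial(k−1, i−1) + 1, n_i is the number of non-perfect (k−i)-element subsets of U, and b_i is the number of (k−i)-element subsets of U that are non-perfect and contained in no perfect (k−i+1)-element subset of U. -/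

import Mathlib

/-!
Split `F_i` by the trace `C = S ∩ U` of its members, so that `|F_i| = ∑_C |F(C)|` over the
`(k-i)`-subsets `C` of `U`, and bound each fibre: a perfect `C` contributes exactly
`binom(k-1, i-1)`, any `C` at most `binom(2k, i)`, and a non-perfect `C` inside a perfect
`D = C ∪ {x}` at most `binom(k-1, i-1) - 1`.

All contradictions come from one configuration: two members of `F` meeting `U` together with
`A` or `B`, which misses `U`. Their union has at most `2k` points as soon as the two members have
at most `k` points outside the third one, so the three must share a point.
For `i ≥ 3`, if `F(D)` is the star of `(i-1)`-sets of `A` through `v`, this forces every member of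
`F(C)` into the star of `i`-sets of `A` through `v`. For `i = 2`, let `T ⊇ D` be a member of `F`
and `t` its point outside `D`: two distinct members of `F(C)` lie on the same side, and a member
inside `A` or `B` must meet `T`, hence contain `t`; so `|F(C)| ≤ 1` or `F(C)` lies in a star
through `t`. In both cases the containment is strict since `C` is not perfect.
-/

/-- A family `F` of finsets is `(d, s)`-conditionally intersecting if there do not exist
`d` distinct members of `F` whose union has size at most `s` and whose intersection is empty. -/
def CondIntersecting {n : ℕ} (d s : ℕ) (F : Finset (Finset (Fin n))) : Prop :=
  ¬ ∃ D ⊆ F, D.card = d ∧ (D.sup id).card ≤ s ∧ D.inf id = ∅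

/-- `F(C) = {S - C : S ∈ F, S ∩ U = C}`. -/
def FamC {n : ℕ} (F : Finset (Finset (Fin n))) (U C : Finset (Fin n)) :
    Finset (Finset (Fin n)) :=
  (F.filter (fun S => S ∩ U = C)).image (fun S => S \ C)

/-- The family of all `m`-element subsets of `A` that contain `v`. -/
def starFam {n : ℕ} (m : ℕ) (A : Finset (Fin n)) (v : Fin n) :
    Finset (Finset (Fin n)) :=
  (A.powersetCard m).filter (fun E => v ∈ E)

/-- A set `C ⊆ U` of size `k - 1` is perfect if it is contained in some member of `F`;
a set `C ⊆ U` of size at most `k - 2` is perfect if `F(C)` is the full star on `A` with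
some core `v ∈ A`, or the full star on `B` with some core `v ∈ B`. -/
def PerfectSet {n : ℕ} (k : ℕ) (F : Finset (Finset (Fin n))) (A B U : Finset (Fin n))
    (C : Finset (Fin n)) : Prop :=
  if C.card = k - 1 then ∃ S ∈ F, C ⊆ S
  else (∃ v ∈ A, FamC F U C = starFam (k - C.card) A v) ∨
       (∃ v ∈ B, FamC F U C = starFam (k - C.card) B v)

open Classical in
/-- `n_i`: the number of non-perfect `(k-i)`-element subsets of `U`. -/
noncomputable def nonPerfectCount {n : ℕ} (k i : ℕ) (F : Finset (Finset (Fin n)))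
    (A B U : Finset (Fin n)) : ℕ :=
  ((U.powersetCard (k - i)).filter (fun C => ¬ PerfectSet k F A B U C)).card

open Classical in
/-- `b_i`: the number of `(k-i)`-element subsets of `U` that are non-perfect and are
contained in no perfect `(k-i+1)`-element subset of `U`. -/
noncomputable def badCount {n : ℕ} (k i : ℕ) (F : Finset (Finset (Fin n)))
    (A B U : Finset (Fin n)) : ℕ :=
  ((U.powersetCard (k - i)).filter (fun C => ¬ PerfectSet k F A B U C ∧
    ∀ D ∈ U.powersetCard (k - i + 1), C ⊆ D → ¬ PerfectSet k F A B U D)).card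

open Finset

lemma subset_and_mem_of_forall_card_sdiff_gt {α : Type*} [DecidableEq α] {A B E : Finset α}
    {i : ℕ} {v : α} (hEI : E ⊆ A ∪ B) (hEc : E.card = i) (hv : v ∈ A)
    (hik : 2 * i ≤ A.card + 1) (hi : 2 ≤ i)
    (hA : ∀ G ⊆ A, v ∈ G → G.card = i - 1 → Disjoint E G → i - 1 < ((E ∪ G) \ A).card)
    (hB : ∀ G ⊆ A, v ∈ G → G.card = i - 1 → i - 1 < ((E ∪ G) \ B).card) :
    E ⊆ A ∧ v ∈ E := by
  have hnot_sub : ∀ G ⊆ A, v ∈ G → G.card = i - 1 → ¬ E ∩ A ⊆ G := fun G hGA hvG hGc h =>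
    (hB G hGA hvG hGc).not_ge <| hGc ▸ card_le_card fun y hy => by
      rw [mem_sdiff, mem_union] at hy
      exact hy.1.elim
        (fun hyE => h (mem_inter.2 ⟨hyE, (mem_union.1 (hEI hyE)).resolve_right hy.2⟩)) id
  have hEA : (E ∩ A).Nonempty := by
    rw [nonempty_iff_ne_empty]
    intro h
    obtain ⟨G, hvG, hGA, hGc⟩ := exists_subsuperset_card_eq (singleton_subset_iff.2 hv)
      (n := i - 1) (by simp; omega) (by omega)
    exact hnot_sub G hGA (singleton_subset_iff.1 hvG) hGc (h ▸ empty_subset G)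
  have hvE : v ∈ E := by
    by_contra hvE
    obtain ⟨G, hvG, hGA, hGc⟩ := exists_subsuperset_card_eq (t := A \ E)
      (singleton_subset_iff.2 (mem_sdiff.2 ⟨hv, hvE⟩)) (n := i - 1) (by simp; omega)
      (by have := le_card_sdiff E A; omega)
    refine (hA G (hGA.trans sdiff_subset) (singleton_subset_iff.1 hvG) hGc
      (disjoint_left.2 fun y hyE hyG => (mem_sdiff.1 (hGA hyG)).2 hyE)).not_ge ?_
    have : ((E ∪ G) \ A).card ≤ (E \ A).card := card_le_card fun y hy => by
      simp only [mem_sdiff, mem_union] at hy ⊢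
      exact ⟨hy.1.resolve_right fun hyG => hy.2 (mem_sdiff.1 (hGA hyG)).1, hy.2⟩
    have := card_inter_add_card_sdiff E A
    have := card_pos.2 hEA
    omega
  refine ⟨fun y hyE => ?_, hvE⟩
  by_contra hyA
  have hlt : (E ∩ A).card < i := hEc ▸ card_lt_card
    (Finset.ssubset_iff_subset_ne.2 ⟨inter_subset_left, fun he => hyA (he ▸ hyE |> mem_inter.1).2⟩)
  obtain ⟨G, hEG, hGA, hGc⟩ := exists_subsuperset_card_eq (inter_subset_right : E ∩ A ⊆ A)
    (n := i - 1) (by omega) (by omega)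
  exact hnot_sub G hGA (hEG (mem_inter.2 ⟨hvE, hv⟩)) hGc hEG

lemma union_subset_or_union_subset_of_card_eq_two {α : Type*} [DecidableEq α]
    {A B E E' : Finset α} (hAB : Disjoint A B) (hEI : E ∪ E' ⊆ A ∪ B)
    (hEc : E.card = 2) (hE'c : E'.card = 2) (hne : E ≠ E')
    (hA : ((E ∪ E') \ A).card ≤ 2 → ¬ Disjoint (E ∩ E') A)
    (hB : ((E ∪ E') \ B).card ≤ 2 → ¬ Disjoint (E ∩ E') B) :
    E ∪ E' ⊆ A ∨ E ∪ E' ⊆ B := by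
  have hinter : (E ∩ E').card ≤ 1 := by
    by_contra h
    exact hne (eq_of_subset_of_card_le (inter_eq_left.1 (eq_of_subset_of_card_le
      inter_subset_left (by omega))) (by omega))
  have hpos : ∀ R, ¬ Disjoint (E ∩ E') R → 1 ≤ (E ∩ E').card := fun R h =>
    card_pos.2 (not_disjoint_iff_nonempty_inter.1 h |>.mono inter_subset_left)
  have hboth : ¬ (¬ Disjoint (E ∩ E') A ∧ ¬ Disjoint (E ∩ E') B) := by
    rintro ⟨hA', hB'⟩
    obtain ⟨a, haE, haA⟩ := not_disjoint_iff.1 hA'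
    obtain ⟨b, hbE, hbB⟩ := not_disjoint_iff.1 hB'
    have hab : a ≠ b := fun h => disjoint_left.1 hAB haA (h ▸ hbB)
    have := card_le_card (insert_subset haE (singleton_subset_iff.2 hbE))
    rw [card_pair hab] at this
    omega
  have hside : ∀ {R R'}, E ∪ E' ⊆ R ∪ R' → ((E ∪ E') \ R').card ≤ ((E ∪ E') ∩ R).card := fun h =>
    card_le_card fun y hy => mem_inter.2 ⟨(mem_sdiff.1 hy).1,
      (mem_union.1 (h (mem_sdiff.1 hy).1)).resolve_right (mem_sdiff.1 hy).2⟩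
  have hunion := card_union_add_card_inter E E'
  have hsplitA := card_inter_add_card_sdiff (E ∪ E') A
  have hsplitB := card_inter_add_card_sdiff (E ∪ E') B
  have hsideA := hside hEI
  have hsideB := hside (hEI.trans (union_comm A B).le)
  have hmeetA := fun h => hpos A (hA h)
  have hmeetB := fun h => hpos B (hB h)
  rw [← sdiff_eq_empty_iff_subset, ← sdiff_eq_empty_iff_subset, ← card_eq_zero, ← card_eq_zero]
  by_cases hXA : ((E ∪ E') \ A).card ≤ 2 <;> by_cases hXB : ((E ∪ E') \ B).card ≤ 2
  · exact absurd ⟨hA hXA, hB hXB⟩ hboth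
  all_goals omega

variable {n k : ℕ} {F : Finset (Finset (Fin n))} {A B C D E E' R S T U : Finset (Fin n)}

lemma mem_starFam {m : ℕ} {v : Fin n} : E ∈ starFam m A v ↔ E ⊆ A ∧ E.card = m ∧ v ∈ E := by
  simp [starFam, mem_powersetCard, and_assoc]

lemma card_starFam {m : ℕ} {v : Fin n} (hv : v ∈ A) (hm : 1 ≤ m) :
    (starFam m A v).card = (A.card - 1).choose (m - 1) := by
  simpa [starFam, singleton_subset_iff] using
    card_filter_powersetCard_subset {v} A m (singleton_subset_iff.2 hv) (by simpa)

lemma CondIntersecting.false_of_triple {s : ℕ} (hci : CondIntersecting 3 s F)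
    (hS : S ∈ F) (hT : T ∈ F) (hR : R ∈ F) (hST : S ≠ T) (hSR : S ≠ R) (hTR : T ≠ R)
    (hunion : (S ∪ T ∪ R).card ≤ s) (hinter : S ∩ T ∩ R = ∅) : False := by
  refine hci ⟨{S, T, R}, ?_, ?_, ?_, ?_⟩
  · simp [insert_subset_iff, hS, hT, hR]
  · rw [card_insert_of_notMem (by simp [hST, hSR]), card_pair hTR]
  · simpa [union_assoc] using hunion
  · simpa [inter_assoc] using hinter

lemma CondIntersecting.false_of_pair_meeting (hci : CondIntersecting 3 (2 * k) F)
    (hR : R ∈ F) (hRk : R.card = k) (hRU : Disjoint R U) (hS : S ∈ F) (hT : T ∈ F)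
    (hSU : (S ∩ U).Nonempty) (hTU : (T ∩ U).Nonempty) (hST : S ≠ T)
    (hcard : ((S ∪ T) \ R).card ≤ k) (hinter : Disjoint (S ∩ T) R) : False := by
  have hne : ∀ X, (X ∩ U).Nonempty → X ≠ R := by
    rintro X ⟨x, hx⟩ rfl
    exact disjoint_left.1 hRU (mem_inter.1 hx).1 (mem_inter.1 hx).2
  refine hci.false_of_triple hS hT hR hST (hne S hSU) (hne T hTU) ?_
    (disjoint_iff_inter_eq_empty.1 hinter)
  calc (S ∪ T ∪ R).card = ((S ∪ T) \ R ∪ R).card := by rw [sdiff_union_self_eq_union]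
    _ ≤ ((S ∪ T) \ R).card + R.card := card_union_le _ _
    _ ≤ 2 * k := by omega

lemma mem_FamC_iff (hCU : C ⊆ U) : E ∈ FamC F U C ↔ Disjoint E U ∧ E ∪ C ∈ F := by
  simp only [FamC, mem_image, mem_filter]
  constructor
  · rintro ⟨S, ⟨hS, rfl⟩, rfl⟩
    refine ⟨disjoint_left.2 fun x hx hxU => ?_, by rwa [sdiff_union_of_subset inter_subset_left]⟩
    exact (mem_sdiff.1 hx).2 (mem_inter.2 ⟨(mem_sdiff.1 hx).1, hxU⟩)
  · rintro ⟨hEU, hEC⟩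
    refine ⟨E ∪ C, ⟨hEC, ?_⟩, ?_⟩
    · rw [union_inter_distrib_right, disjoint_iff_inter_eq_empty.1 hEU, empty_union,
        inter_eq_left.2 hCU]
    · rw [union_sdiff_right, sdiff_eq_self_of_disjoint (hEU.mono_right hCU)]

lemma card_FamC : (FamC F U C).card = (F.filter (· ∩ U = C)).card := by
  refine card_image_of_injOn fun S hS S' hS' (h : S \ C = S' \ C) => ?_
  have hC : ∀ {X}, X ∈ (F.filter (· ∩ U = C) : Set _) → C ⊆ X := fun hX =>
    (mem_filter.1 (mem_coe.1 hX)).2 ▸ inter_subset_left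
  rw [← sdiff_union_of_subset (hC hS), ← sdiff_union_of_subset (hC hS'), h]

lemma card_add_card_of_mem_FamC (hunif : ∀ S ∈ F, S.card = k) (hCU : C ⊆ U)
    (hE : E ∈ FamC F U C) : E.card + C.card = k := by
  obtain ⟨hEU, hEC⟩ := (mem_FamC_iff hCU).1 hE
  rw [← card_union_of_disjoint (hEU.mono_right hCU), hunif _ hEC]

lemma subset_union_of_mem_FamC (hU : U = univ \ (A ∪ B)) (hCU : C ⊆ U)
    (hE : E ∈ FamC F U C) : E ⊆ A ∪ B := by
  intro x hx
  by_contra h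
  exact disjoint_left.1 ((mem_FamC_iff hCU).1 hE).1 hx (hU ▸ mem_sdiff.2 ⟨mem_univ x, h⟩)

lemma CondIntersecting.false_of_mem_FamC (hci : CondIntersecting 3 (2 * k) F)
    (hR : R ∈ F) (hRk : R.card = k) (hRU : Disjoint R U) (hC : C.Nonempty) (hCD : C ⊆ D)
    (hDU : D ⊆ U) (hE : E ∈ FamC F U C) (hE' : E' ∈ FamC F U D) (hne : E ≠ E' ∨ C ≠ D)
    (hcard : D.card + ((E ∪ E') \ R).card ≤ k) (hinter : Disjoint (E ∩ E') R) : False := by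
  obtain ⟨hEU, hS⟩ := (mem_FamC_iff (hCD.trans hDU)).1 hE
  obtain ⟨hE'U, hT⟩ := (mem_FamC_iff hDU).1 hE'
  have trace : ∀ {X Y}, Disjoint X U → Y ⊆ U → (X ∪ Y) ∩ U = Y := fun hX hY => by
    rw [union_inter_distrib_right, disjoint_iff_inter_eq_empty.1 hX, empty_union,
      inter_eq_left.2 hY]
  refine hci.false_of_pair_meeting hR hRk hRU hS hT ?_ ?_ ?_ ?_ ?_
  · rwa [trace hEU (hCD.trans hDU)]
  · rw [trace hE'U hDU]; exact hC.mono hCD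
  · intro h
    have hCD' : C = D := by rw [← trace hEU (hCD.trans hDU), h, trace hE'U hDU]
    refine hne.elim (fun hEE' => hEE' ?_) (· hCD')
    rw [← union_sdiff_cancel_right (hEU.mono_right (hCD.trans hDU)), h, hCD',
      union_sdiff_cancel_right (hE'U.mono_right hDU)]
  · calc ((E ∪ C ∪ (E' ∪ D)) \ R).card ≤ (D ∪ (E ∪ E') \ R).card := by
          refine card_le_card fun x hx => ?_
          simp only [mem_sdiff, mem_union] at hx ⊢
          have := @hCD x
          tauto
      _ ≤ D.card + ((E ∪ E') \ R).card := card_union_le _ _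
      _ ≤ k := hcard
  · refine disjoint_left.2 fun x hx hxR => disjoint_left.1 hinter ?_ hxR
    have hxU : x ∉ U := disjoint_left.1 hRU hxR
    simp only [mem_inter, mem_union] at hx ⊢
    have := @hCD x; have := @hDU x
    tauto

lemma CondIntersecting.not_disjoint_of_mem_FamC (hci : CondIntersecting 3 (2 * k) F)
    (hR : R ∈ F) (hRk : R.card = k) (hRU : Disjoint R U) (hC : C.Nonempty) (hCU : C ⊆ U)
    (hE : E ∈ FamC F U C) (hER : E ⊆ R) (hT : T ∈ F) (hTk : T.card = k) (hCT : C ⊆ T)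
    {x : Fin n} (hxT : x ∈ T) (hxU : x ∈ U) (hxC : x ∉ C) : ¬ Disjoint E T := by
  intro hET
  obtain ⟨hEU, hS⟩ := (mem_FamC_iff hCU).1 hE
  refine hci.false_of_pair_meeting hR hRk hRU hS hT ?_ ⟨x, mem_inter.2 ⟨hxT, hxU⟩⟩ ?_ ?_ ?_
  · exact hC.mono fun y hy => mem_inter.2 ⟨mem_union_right _ hy, hCU hy⟩
  · rintro rfl
    exact (mem_union.1 hxT).elim (disjoint_left.1 hEU · hxU) hxC
  · refine (card_le_card fun y hy => ?_).trans hTk.le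
    simp only [mem_sdiff, mem_union] at hy
    exact hy.1.elim (fun h => h.elim (fun hyE => absurd (hER hyE) hy.2) (@hCT y)) id
  · refine disjoint_left.2 fun y hy hyR => ?_
    simp only [mem_inter, mem_union] at hy
    exact hy.1.elim (disjoint_left.1 hET · hy.2) fun hyC => disjoint_left.1 hRU hyR (hCU hyC)

lemma FamC_subset_starFam_of_insert (hunif : ∀ S ∈ F, S.card = k)
    (hci : CondIntersecting 3 (2 * k) F) (hU : U = univ \ (A ∪ B)) (hA : A ∈ F) (hB : B ∈ F)
    (hAB : Disjoint A B) {i : ℕ} (hi : 3 ≤ i) (hik : 2 * i ≤ k + 1) (hCU : C ⊆ U)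
    (hCc : C.card = k - i) {x v : Fin n} (hxU : x ∈ U) (hxC : x ∉ C) (hv : v ∈ A)
    (hstar : FamC F U (insert x C) = starFam (i - 1) A v) :
    FamC F U C ⊆ starFam i A v := by
  have hAk := hunif A hA
  have hC : C.Nonempty := card_pos.1 (by omega)
  intro E hE
  have hEc : E.card = i := by have := card_add_card_of_mem_FamC hunif hCU hE; omega
  -- `E ∪ C` and `G ∪ insert x C`, for `G` in the star, conflict with `R ∈ {A, B}`
  have conflict : ∀ R ∈ F, R ⊆ A ∪ B → ∀ G ⊆ A, v ∈ G → G.card = i - 1 →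
      Disjoint (E ∩ G) R → i - 1 < ((E ∪ G) \ R).card := fun R hR hRI G hGA hvG hGc hinter => by
    by_contra hcard
    exact hci.false_of_mem_FamC hR (hunif R hR) (hU ▸ disjoint_sdiff.mono_left hRI) hC
      (subset_insert x C) (insert_subset hxU hCU) hE (hstar ▸ mem_starFam.2 ⟨hGA, hGc, hvG⟩)
      (Or.inr fun h => hxC (h ▸ mem_insert_self x C))
      (by rw [card_insert_of_notMem hxC]; omega) hinter
  obtain ⟨hEA, hvE⟩ := subset_and_mem_of_forall_card_sdiff_gt (subset_union_of_mem_FamC hU hCU hE)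
    hEc hv (by omega) (by omega)
    (fun G hGA hvG hGc hEG => conflict A hA subset_union_left G hGA hvG hGc
      (by rw [disjoint_iff_inter_eq_empty.1 hEG]; exact disjoint_empty_left _))
    (fun G hGA hvG hGc => conflict B hB subset_union_right G hGA hvG hGc
      (disjoint_left.2 fun y hy => disjoint_left.1 hAB (hGA (mem_inter.1 hy).2)))
  exact mem_starFam.2 ⟨hEA, hEc, hvE⟩

lemma union_subset_or_union_subset_of_mem_FamC (hunif : ∀ S ∈ F, S.card = k)
    (hci : CondIntersecting 3 (2 * k) F) (hU : U = univ \ (A ∪ B)) (hA : A ∈ F) (hB : B ∈ F)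
    (hAB : Disjoint A B) (hC : C.Nonempty) (hCU : C ⊆ U) (hCc : C.card = k - 2)
    (hE : E ∈ FamC F U C) (hE' : E' ∈ FamC F U C) (hne : E ≠ E') :
    E ∪ E' ⊆ A ∨ E ∪ E' ⊆ B := by
  have hk : 3 ≤ k := by have := card_pos.2 hC; omega
  have hU' : ∀ X ⊆ A ∪ B, Disjoint X U := fun X hX => hU ▸ disjoint_sdiff.mono_left hX
  have conflict : ∀ R ∈ F, R ⊆ A ∪ B → ((E ∪ E') \ R).card ≤ 2 → ¬ Disjoint (E ∩ E') R :=
    fun R hR hRI hcard hinter => hci.false_of_mem_FamC hR (hunif R hR) (hU' R hRI) hC subset_rfl hCU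
      hE hE' (Or.inl hne) (by omega) hinter
  refine union_subset_or_union_subset_of_card_eq_two hAB
    (union_subset (subset_union_of_mem_FamC hU hCU hE) (subset_union_of_mem_FamC hU hCU hE'))
    (by have := card_add_card_of_mem_FamC hunif hCU hE; omega)
    (by have := card_add_card_of_mem_FamC hunif hCU hE'; omega) hne
    (conflict A hA subset_union_left) (conflict B hB subset_union_right)

lemma card_le_one_or_FamC_subset_starFam_two (hunif : ∀ S ∈ F, S.card = k)
    (hci : CondIntersecting 3 (2 * k) F) (hU : U = univ \ (A ∪ B)) (hA : A ∈ F) (hB : B ∈ F)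
    (hAB : Disjoint A B) (hC : C.Nonempty) (hCU : C ⊆ U) (hCc : C.card = k - 2)
    {x : Fin n} (hxU : x ∈ U) (hxC : x ∉ C) (hT : T ∈ F) (hxCT : insert x C ⊆ T) :
    (FamC F U C).card ≤ 1 ∨ (∃ t ∈ A, FamC F U C ⊆ starFam 2 A t) ∨
      ∃ t ∈ B, FamC F U C ⊆ starFam 2 B t := by
  rcases le_or_gt (FamC F U C).card 1 with h | h
  · exact Or.inl h
  right
  have hk : 3 ≤ k := by have := card_pos.2 hC; omega
  have hU' : ∀ X ⊆ A ∪ B, Disjoint X U := fun X hX => hU ▸ disjoint_sdiff.mono_left hX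
  have hEc : ∀ E ∈ FamC F U C, E.card = 2 := fun E hE => by
    have := card_add_card_of_mem_FamC hunif hCU hE; omega
  obtain ⟨t, ht⟩ : ∃ t, T \ insert x C = {t} := card_eq_one.1 (by
    rw [card_sdiff_of_subset hxCT, hunif T hT, card_insert_of_notMem hxC, hCc]; omega)
  have one_side : ∀ E ∈ FamC F U C, E ⊆ A ∨ E ⊆ B := fun E hE => by
    obtain ⟨E', hE', hne⟩ := exists_mem_ne h E
    exact (union_subset_or_union_subset_of_mem_FamC hunif hci hU hA hB hAB hC hCU hCc hE hE'
      hne.symm).imp (subset_union_left.trans ·) (subset_union_left.trans ·)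
  -- each member lies inside `A` or `B`, hence meets `T`, but misses `insert x C ⊆ U`
  have core : ∀ E ∈ FamC F U C, t ∈ E := fun E hE => by
    have hmeet : ∀ R ∈ F, R ⊆ A ∪ B → E ⊆ R → ¬ Disjoint E T := fun R hR hRI hER =>
      hci.not_disjoint_of_mem_FamC hR (hunif R hR) (hU' R hRI) hC hCU hE hER hT (hunif T hT)
        ((subset_insert x C).trans hxCT) (hxCT (mem_insert_self x C)) hxU hxC
    obtain ⟨y, hyE, hyT⟩ := not_disjoint_iff.1 ((one_side E hE).elim
      (hmeet A hA subset_union_left) (hmeet B hB subset_union_right))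
    have hyD : y ∉ insert x C := fun hy =>
      disjoint_left.1 ((mem_FamC_iff hCU).1 hE).1 hyE (insert_subset hxU hCU hy)
    have : y ∈ ({t} : Finset (Fin n)) := ht ▸ mem_sdiff.2 ⟨hyT, hyD⟩
    exact mem_singleton.1 this ▸ hyE
  obtain ⟨E, hE⟩ := card_pos.1 (zero_lt_one.trans h)
  have side : ∀ {R R'}, Disjoint R R' → t ∈ R →
      (∀ E ∈ FamC F U C, E ⊆ R ∨ E ⊆ R') → FamC F U C ⊆ starFam 2 R t := fun hRR' htR hside E hE =>
    mem_starFam.2 ⟨(hside E hE).resolve_right fun h => disjoint_left.1 hRR' htR (h (core E hE)),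
      hEc E hE, core E hE⟩
  rcases one_side E hE with hEA | hEB
  · exact Or.inl ⟨t, hEA (core E hE), side hAB (hEA (core E hE)) one_side⟩
  · exact Or.inr ⟨t, hEB (core E hE), side hAB.symm (hEB (core E hE))
      fun E hE => (one_side E hE).symm⟩

lemma card_FamC_of_perfectSet (hAk : A.card = k) (hBk : B.card = k) {i : ℕ} (hi : 2 ≤ i)
    (hik : i ≤ k) (hCc : C.card = k - i) (hp : PerfectSet k F A B U C) :
    (FamC F U C).card = (k - 1).choose (i - 1) := by
  rw [PerfectSet, if_neg (by omega), hCc, Nat.sub_sub_self hik] at hp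
  rcases hp with ⟨v, hv, h⟩ | ⟨v, hv, h⟩
  · rw [h, card_starFam hv (by omega), hAk]
  · rw [h, card_starFam hv (by omega), hBk]

lemma card_FamC_le_choose (hunif : ∀ S ∈ F, S.card = k) (hU : U = univ \ (A ∪ B))
    (hAB : Disjoint A B) (hAk : A.card = k) (hBk : B.card = k) {i : ℕ} (hik : i ≤ k)
    (hCU : C ⊆ U) (hCc : C.card = k - i) : (FamC F U C).card ≤ (2 * k).choose i := by
  calc (FamC F U C).card ≤ ((A ∪ B).powersetCard i).card := card_le_card fun E hE =>
        mem_powersetCard.2 ⟨subset_union_of_mem_FamC hU hCU hE,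
          by have := card_add_card_of_mem_FamC hunif hCU hE; omega⟩
    _ = (2 * k).choose i := by rw [card_powersetCard, card_union_of_disjoint hAB, hAk, hBk, two_mul]

lemma card_FamC_lt_of_not_perfectSet (hunif : ∀ S ∈ F, S.card = k)
    (hci : CondIntersecting 3 (2 * k) F) (hU : U = univ \ (A ∪ B)) (hA : A ∈ F) (hB : B ∈ F)
    (hAB : Disjoint A B) {i : ℕ} (hi : 2 ≤ i) (hik : 2 * i ≤ k + 1) (hCU : C ⊆ U)
    (hCc : C.card = k - i) (hnp : ¬ PerfectSet k F A B U C) (hDU : D ⊆ U)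
    (hDc : D.card = k - i + 1) (hCD : C ⊆ D) (hpD : PerfectSet k F A B U D) :
    (FamC F U C).card < (k - 1).choose (i - 1) := by
  have hAk := hunif A hA
  have hBk := hunif B hB
  have hC : C.Nonempty := card_pos.1 (by omega)
  obtain ⟨x, hx⟩ := card_eq_one.1 (by rw [card_sdiff_of_subset hCD]; omega : (D \ C).card = 1)
  have hxD : x ∈ D \ C := hx ▸ mem_singleton_self x
  have hDx : D = insert x C := by rw [← sdiff_union_of_subset hCD, hx, insert_eq]
  obtain ⟨hxU, hxC⟩ : x ∈ U ∧ x ∉ C := ⟨hDU (mem_sdiff.1 hxD).1, (mem_sdiff.1 hxD).2⟩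
  rw [PerfectSet, if_neg (by omega), hCc, Nat.sub_sub_self (by omega)] at hnp
  simp only [not_or, not_exists, not_and] at hnp
  have hlt : ∀ {R v}, R.card = k → v ∈ R → FamC F U C ⊆ starFam i R v →
      FamC F U C ≠ starFam i R v → (FamC F U C).card < (k - 1).choose (i - 1) :=
    fun hRk hv hsub hne => by
      have := card_lt_card (Finset.ssubset_iff_subset_ne.2 ⟨hsub, hne⟩)
      rwa [card_starFam hv (by omega), hRk] at this
  obtain rfl | hi3 := eq_or_lt_of_le hi
  · rw [PerfectSet, if_pos (by omega)] at hpD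
    obtain ⟨T, hT, hDT⟩ := hpD
    rcases card_le_one_or_FamC_subset_starFam_two hunif hci hU hA hB hAB hC hCU hCc hxU hxC hT
      (hDx ▸ hDT) with h | ⟨t, ht, hsub⟩ | ⟨t, ht, hsub⟩
    · rw [Nat.choose_one_right]; omega
    · exact hlt hAk ht hsub (hnp.1 t ht)
    · exact hlt hBk ht hsub (hnp.2 t ht)
  · rw [PerfectSet, if_neg (by omega), hDc, (by omega : k - (k - i + 1) = i - 1), hDx] at hpD
    rcases hpD with ⟨v, hv, hstar⟩ | ⟨v, hv, hstar⟩
    · exact hlt hAk hv (FamC_subset_starFam_of_insert hunif hci hU hA hB hAB hi3 hik hCU hCc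
        hxU hxC hv hstar) (hnp.1 v hv)
    · exact hlt hBk hv (FamC_subset_starFam_of_insert hunif hci (union_comm A B ▸ hU) hB hA
        hAB.symm hi3 hik hCU hCc hxU hxC hv hstar) (hnp.2 v hv)

lemma card_filter_card_inter_eq_sum_card_FamC (hunif : ∀ S ∈ F, S.card = k) {I : Finset (Fin n)}
    {i : ℕ} (hik : i ≤ k) :
    (F.filter fun S => (S ∩ I).card = i).card =
      ∑ C ∈ (univ \ I).powersetCard (k - i), (FamC F (univ \ I) C).card := by
  have hsplit : ∀ S ∈ F, (S ∩ I).card + (S ∩ (univ \ I)).card = k := fun S hS => by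
    rw [(by ext; simp : S ∩ (univ \ I) = S \ I), card_inter_add_card_sdiff, hunif S hS]
  rw [card_eq_sum_card_fiberwise (f := (· ∩ (univ \ I))) (t := (univ \ I).powersetCard (k - i))
    fun S hS => mem_powersetCard.2 ⟨inter_subset_right, by
      have := hsplit S (mem_filter.1 hS).1; have := (mem_filter.1 hS).2; dsimp only; omega⟩]
  refine sum_congr rfl fun C hC => ?_
  rw [card_FamC, filter_filter]
  refine congrArg card (filter_congr fun S hS => and_iff_right_of_imp fun h => ?_)
  have := hsplit S hS
  have := (mem_powersetCard.1 hC).2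
  rw [h] at *
  omega

open Classical in
lemma card_FamC_le_indicator (hunif : ∀ S ∈ F, S.card = k)
    (hci : CondIntersecting 3 (2 * k) F) (hU : U = univ \ (A ∪ B)) (hA : A ∈ F) (hB : B ∈ F)
    (hAB : Disjoint A B) {i : ℕ} (hi : 2 ≤ i) (hik : 2 * i ≤ k + 1)
    (hC : C ∈ U.powersetCard (k - i)) :
    ((FamC F U C).card : ℤ) ≤ ((k - 1).choose (i - 1) : ℕ)
      + (((2 * k).choose i : ℤ) - ((k - 1).choose (i - 1) : ℕ) + 1)
        * (if ¬ PerfectSet k F A B U C ∧ ∀ D ∈ U.powersetCard (k - i + 1), C ⊆ D →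
            ¬ PerfectSet k F A B U D then 1 else 0)
      - (if ¬ PerfectSet k F A B U C then 1 else 0) := by
  obtain ⟨hCU, hCc⟩ := mem_powersetCard.1 hC
  by_cases hp : PerfectSet k F A B U C
  · simp [hp, card_FamC_of_perfectSet (hunif A hA) (hunif B hB) hi (by omega) hCc hp]
  by_cases hbad : ∀ D ∈ U.powersetCard (k - i + 1), C ⊆ D → ¬ PerfectSet k F A B U D
  · have := card_FamC_le_choose hunif hU hAB (hunif A hA) (hunif B hB) (by omega) hCU hCc
    rw [if_pos ⟨hp, hbad⟩, if_pos hp]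
    linarith
  · simp only [not_forall, not_not] at hbad
    obtain ⟨D, hD, hCD, hpD⟩ := hbad
    obtain ⟨hDU, hDc⟩ := mem_powersetCard.1 hD
    have := card_FamC_lt_of_not_perfectSet hunif hci hU hA hB hAB hi hik hCU hCc hp hDU hDc hCD hpD
    rw [if_neg fun h => h.2 D hD hCD hpD, if_pos hp]
    omega

theorem stmt13_general (n k : ℕ)
    (F : Finset (Finset (Fin n))) (hunif : ∀ S ∈ F, S.card = k)
    (hci : CondIntersecting 3 (2 * k) F)
    (A B : Finset (Fin n)) (hA : A ∈ F) (hB : B ∈ F) (hAB : Disjoint A B)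
    (i : ℕ) (hi1 : 2 ≤ i) (hi2 : 2 * i ≤ k + 1) :
    ((F.filter (fun S => (S ∩ (A ∪ B)).card = i)).card : ℤ) ≤
      (((k - 1).choose (i - 1) * (n - 2 * k).choose (k - i) : ℕ) : ℤ)
      + (((2 * k).choose i : ℤ) - (((k - 1).choose (i - 1) : ℕ) : ℤ) + 1)
          * (badCount k i F A B (Finset.univ \ (A ∪ B)) : ℤ)
      - (nonPerfectCount k i F A B (Finset.univ \ (A ∪ B)) : ℤ) := by
  have hUc : (univ \ (A ∪ B)).card = n - 2 * k := by
    rw [card_univ_sdiff, Fintype.card_fin, card_union_of_disjoint hAB, hunif A hA, hunif B hB,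
      two_mul]
  rw [card_filter_card_inter_eq_sum_card_FamC hunif (by omega), badCount, nonPerfectCount,
    natCast_card_filter, natCast_card_filter, Nat.cast_sum]
  refine (sum_le_sum fun C hC =>
    card_FamC_le_indicator hunif hci rfl hA hB hAB hi1 hi2 hC).trans_eq ?_
  rw [sum_sub_distrib, sum_add_distrib, ← mul_sum, sum_const, card_powersetCard, hUc]
  push_cast
  ring

theorem stmt13 (n k : ℕ) (hk : 3 ≤ k)
    (F : Finset (Finset (Fin n))) (hunif : ∀ S ∈ F, S.card = k)
    (hci : CondIntersecting 3 (2 * k) F)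
    (A B : Finset (Fin n)) (hA : A ∈ F) (hB : B ∈ F) (hAB : Disjoint A B)
    (i : ℕ) (hi1 : 2 ≤ i) (hi2 : 2 * i ≤ k + 1) :
    ((F.filter (fun S => (S ∩ (A ∪ B)).card = i)).card : ℤ) ≤
      (((k - 1).choose (i - 1) * (n - 2 * k).choose (k - i) : ℕ) : ℤ)
      + (((2 * k).choose i : ℤ) - (((k - 1).choose (i - 1) : ℕ) : ℤ) + 1)
          * (badCount k i F A B (Finset.univ \ (A ∪ B)) : ℤ)
      - (nonPerfectCount k i F A B (Finset.univ \ (A ∪ B)) : ℤ) :=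
  stmt13_general n k F hunif hci A B hA hB hAB i hi1 hi2
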